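/- For every natural number n, the n-th bi-periodic Jacobsthal matrix J_n equals the 2×2 matrix with entries J_n(0,0) = (b/a)^{ε(n)}·j_{n+1}, J_n(0,1) = 2(b/a)·j_n, J_n(1,0) = j_n, J_n(1,1) = 2(b/a)^{ε(n)}·j_{n-1}, where ε(n) = 0 if n is even and ε(n) = 1 if n is odd, and j_{-1} is interpreted as 1/2. -/

import Mathlib

/-!
Both sides satisfy `M (n + 2) = c (n + 2) • M (n + 1) + 2 • M n`, where `c n` is `a` for even `n`
and `b` for odd `n`, and they agree at `n = 0, 1`. For the entries weighted by `(b / a) ^ (n % 2)`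
the recurrence comes down to `(b / a) ^ (n % 2) * c (n + 1) = c n * (b / a) ^ ((n + 1) % 2)`:
the weight turns the coefficient pattern of the shifted sequence into that of the original one.
-/

noncomputable def jj (a b : ℝ) : ℕ → ℝ
  | 0 => 0
  | 1 => 1
  | n + 2 => (if Even (n + 2) then a else b) * jj a b (n + 1) + 2 * jj a b n

noncomputable def JM (a b : ℝ) : ℕ → Matrix (Fin 2) (Fin 2) ℝ
  | 0 => 1
  | 1 => !![b, 2 * b / a; 1, 0]
  | n + 2 => (if Even (n + 2) then a else b) • JM a b (n + 1) + (2 : ℝ) • JM a b n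

namespace BiperiodicJacobsthal

variable (a b : ℝ)

noncomputable def coeff (n : ℕ) : ℝ := if Even n then a else b

noncomputable def jjPred (n : ℕ) : ℝ := if n = 0 then 1 / 2 else jj a b (n - 1)

noncomputable def closedForm (n : ℕ) : Matrix (Fin 2) (Fin 2) ℝ :=
  !![(b / a) ^ (n % 2) * jj a b (n + 1), 2 * (b / a) * jj a b n;
     jj a b n, 2 * (b / a) ^ (n % 2) * jjPred a b n]

lemma coeff_add_two (n : ℕ) : coeff a b (n + 2) = coeff a b n := by
  simp [coeff, Nat.even_add_one]

lemma jj_add_two (n : ℕ) :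
    jj a b (n + 2) = coeff a b (n + 2) * jj a b (n + 1) + 2 * jj a b n := by
  rw [jj, coeff]

lemma JM_add_two (n : ℕ) :
    JM a b (n + 2) = coeff a b (n + 2) • JM a b (n + 1) + (2 : ℝ) • JM a b n := by
  rw [JM, coeff]

/-- The convention `j₋₁ = 1 / 2` is what makes the recurrence hold already at `n = 0`. -/
lemma jj_succ (n : ℕ) : jj a b (n + 1) = coeff a b (n + 1) * jj a b n + 2 * jjPred a b n := by
  cases n with
  | zero => norm_num [jj, jjPred]
  | succ m => simp [jj_add_two, jjPred]

lemma jjPred_succ (n : ℕ) : jjPred a b (n + 1) = jj a b n := by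
  simp [jjPred]

variable {a} in
lemma div_pow_mod_two_mul_coeff_succ (ha : a ≠ 0) (n : ℕ) :
    (b / a) ^ (n % 2) * coeff a b (n + 1) = coeff a b n * (b / a) ^ ((n + 1) % 2) := by
  rcases Nat.even_or_odd n with hn | hn
  · rw [coeff, coeff, if_pos hn, if_neg (Nat.not_even_iff_odd.mpr hn.add_one), Nat.even_iff.mp hn,
      Nat.odd_iff.mp hn.add_one]
    field_simp
  · rw [coeff, coeff, if_neg (Nat.not_even_iff_odd.mpr hn), if_pos hn.add_one, Nat.odd_iff.mp hn,
      Nat.even_iff.mp hn.add_one]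
    field_simp

variable {a} in
lemma closedForm_add_two (ha : a ≠ 0) (n : ℕ) :
    closedForm a b (n + 2) =
      coeff a b (n + 2) • closedForm a b (n + 1) + (2 : ℝ) • closedForm a b n := by
  simp only [closedForm, Nat.add_mod_right, Matrix.smul_of, Matrix.of_add_of, Matrix.smul_cons,
    smul_eq_mul, Matrix.smul_empty, Matrix.cons_add_cons, Matrix.empty_add_empty,
    EmbeddingLike.apply_eq_iff_eq, Matrix.vecCons_inj, and_true]
  refine ⟨⟨?_, ?_⟩, jj_add_two a b n, ?_⟩
  · rw [jj_add_two a b (n + 1), coeff_add_two, coeff_add_two]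
    linear_combination jj a b (n + 2) * div_pow_mod_two_mul_coeff_succ b ha n
  · rw [jj_add_two]
    ring
  · rw [jjPred_succ, jjPred_succ, jj_succ a b n, coeff_add_two]
    linear_combination 2 * jj a b n * div_pow_mod_two_mul_coeff_succ b ha n

end BiperiodicJacobsthal

open BiperiodicJacobsthal in
theorem stmt1 (a b : ℝ) (ha : a ≠ 0) (n : ℕ) :
    JM a b n =
      !![(b / a) ^ (n % 2) * jj a b (n + 1), 2 * (b / a) * jj a b n;
         jj a b n, 2 * (b / a) ^ (n % 2) * (if n = 0 then (1 / 2 : ℝ) else jj a b (n - 1))] := by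
  change JM a b n = closedForm a b n
  induction n using Nat.twoStepInduction with
  | zero =>
    rw [JM, closedForm, Matrix.one_fin_two]
    norm_num [jj, jjPred]
  | one =>
    rw [JM, closedForm]
    norm_num [jj, jjPred, div_mul_cancel₀ b ha, mul_div_assoc]
  | more n ih₀ ih₁ => rw [JM_add_two, closedForm_add_two b ha, ih₀, ih₁]
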